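/- There exists r0>0 such that for all ε1,ε2>0 with √(ε1²+ε2²)<r0, the quantity x1(P123) = 1/(1 − (T−P)/(P−S) + (F(ε1/ε2)−P)/((P−S)ε2)) satisfies 0 < x1(P123) < 1. (In particular the red equilibrium, whose first coordinate is x1(P123) and which does not depend on q, is always biological.) -/

import Mathlib

/-- The pay-off `F(ρ) = (Pρ² + (S+T)ρ + R)/(1+ρ)²` of ATFT against itself. -/
noncomputable def F (P S T R ρ : ℝ) : ℝ := (P * ρ ^ 2 + (S + T) * ρ + R) / (1 + ρ) ^ 2

/-!
Since `F(ρ) - P = ((S + T - 2P)ρ + (R - P)) / (1 + ρ)²`, at `ρ = ε₁/ε₂` the quotient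
`(F - P)/ε₂` is at least `min (S + T - 2P) (R - P) / (ε₁ + ε₂)`, which blows up as `ε → 0`.
Once it exceeds `T - P`, the denominator of `x₁(P₁₂₃)` exceeds `1`.
-/

lemma F_sub_div_eq (P S T R : ℝ) {ε₁ ε₂ : ℝ} (h₂ : ε₂ ≠ 0) (h : ε₁ + ε₂ ≠ 0) :
    (F P S T R (ε₁ / ε₂) - P) / ε₂ =
      ((S + T - 2 * P) * ε₁ + (R - P) * ε₂) / (ε₁ + ε₂) ^ 2 := by
  have h_one_add : 1 + ε₁ / ε₂ = (ε₁ + ε₂) / ε₂ := by field_simp; ring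
  unfold F
  rw [h_one_add]
  field_simp
  ring

lemma min_div_le_mul_add_mul_div_sq {a b x y : ℝ} (hx : 0 ≤ x) (hy : 0 ≤ y) (hxy : 0 < x + y) :
    min a b / (x + y) ≤ (a * x + b * y) / (x + y) ^ 2 := by
  rw [sq, ← div_div]
  gcongr
  rw [le_div_iff₀ hxy]
  nlinarith [min_le_left a b, min_le_right a b]

lemma add_le_two_mul_sqrt_sq_add_sq (x y : ℝ) : x + y ≤ 2 * √(x ^ 2 + y ^ 2) := by
  have hx : x ≤ √(x ^ 2 + y ^ 2) := Real.le_sqrt_of_sq_le (by nlinarith)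
  have hy : y ≤ √(x ^ 2 + y ^ 2) := Real.le_sqrt_of_sq_le (by nlinarith)
  linarith

theorem stmt_7_general (T R P S : ℝ) (hRP : R > P) (hPS : P > S)
    (hlow : P < (S + T) / 2) :
    ∃ r0 : ℝ, 0 < r0 ∧
      ∀ ε1 ε2 : ℝ, 0 < ε1 → 0 < ε2 → Real.sqrt (ε1 ^ 2 + ε2 ^ 2) < r0 →
        0 < 1 / (1 - (T - P) / (P - S) + (F P S T R (ε1 / ε2) - P) / ((P - S) * ε2)) ∧
        1 / (1 - (T - P) / (P - S) + (F P S T R (ε1 / ε2) - P) / ((P - S) * ε2)) < 1 := by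
  set c := min (S + T - 2 * P) (R - P)
  have hc : 0 < c := lt_min (by linarith) (by linarith)
  have hTP : 0 < T - P := by linarith
  refine ⟨c / (2 * (T - P)), by positivity, fun ε₁ ε₂ h₁ h₂ hr => ?_⟩
  have hsum : 0 < ε₁ + ε₂ := by positivity
  have hsmall : ε₁ + ε₂ < c / (T - P) := calc
    ε₁ + ε₂ ≤ 2 * √(ε₁ ^ 2 + ε₂ ^ 2) := add_le_two_mul_sqrt_sq_add_sq ε₁ ε₂
    _ < 2 * (c / (2 * (T - P))) := by gcongr
    _ = c / (T - P) := by field_simp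
  have hgain : T - P < (F P S T R (ε₁ / ε₂) - P) / ε₂ := calc
    T - P < c / (ε₁ + ε₂) := by
      rw [lt_div_iff₀ hsum]
      rwa [lt_div_iff₀ hTP, mul_comm] at hsmall
    _ ≤ ((S + T - 2 * P) * ε₁ + (R - P) * ε₂) / (ε₁ + ε₂) ^ 2 :=
      min_div_le_mul_add_mul_div_sq h₁.le h₂.le hsum
    _ = _ := (F_sub_div_eq P S T R h₂.ne' hsum.ne').symm
  have hD : 1 < 1 - (T - P) / (P - S) + (F P S T R (ε₁ / ε₂) - P) / ((P - S) * ε₂) := by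
    rw [mul_comm (P - S), ← div_div]
    linarith [div_lt_div_of_pos_right hgain (sub_pos.2 hPS)]
  exact ⟨by positivity, (div_lt_one (by linarith)).2 hD⟩

theorem stmt_7 (T R P S : ℝ) (hTR : T > R) (hRP : R > P) (hPS : P > S)
    (hlow : P < (S + T) / 2) (hup : (S + T) / 2 < R) :
    ∃ r0 : ℝ, 0 < r0 ∧
      ∀ ε1 ε2 : ℝ, 0 < ε1 → 0 < ε2 → Real.sqrt (ε1 ^ 2 + ε2 ^ 2) < r0 →
        0 < 1 / (1 - (T - P) / (P - S) + (F P S T R (ε1 / ε2) - P) / ((P - S) * ε2)) ∧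
        1 / (1 - (T - P) / (P - S) + (F P S T R (ε1 / ε2) - P) / ((P - S) * ε2)) < 1 :=
  stmt_7_general T R P S hRP hPS hlow
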